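/- arXiv:1510.05195 — 5 statements merged into one kernel-verified Lean document; each statement's English description precedes it below -/
import Mathlib

section
/- Let n ≥ 2, k a field, a_1,...,a_n ∈ k all nonzero, and A = T(v_1,...,v_n)/(Σ a_i v_i^2). Then the Koszul dual algebra A^! = T(v_1*,...,v_n*)/(R^⊥), where R^⊥ is spanned by the elements v_i* v_j* for i ≠ j and a_j (v_i*)^2 − a_i (v_j*)^2, is concentrated in weight gradings 0, 1, and 2; in particular every weight-3 monomial in the v_i* lies in the ideal generated by R^⊥. -/
noncomputable section

open FreeAlgebra

/-- The Koszul dual algebra `A^! = T(v₁*,…,vₙ*)/(R^⊥)` of `A = T(v₁,…,vₙ)/(Σ aᵢvᵢ²)`,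
where `R^⊥` is spanned by the elements `vᵢ* vⱼ*` for `i ≠ j` and `aⱼ (vᵢ*)² − aᵢ (vⱼ*)²`. -/
def SphereKoszulDual (k : Type*) [Field k] (n : ℕ) (a : Fin n → k) : Type _ :=
  RingQuot (fun x y : FreeAlgebra k (Fin n) =>
    ((∃ i j : Fin n, i ≠ j ∧ x = ι k i * ι k j) ∨
     (∃ i j : Fin n, i ≠ j ∧
        x = a j • (ι k i * ι k i) - a i • (ι k j * ι k j))) ∧ y = 0)

instance (k : Type*) [Field k] (n : ℕ) (a : Fin n → k) : Ring (SphereKoszulDual k n a) := by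
  unfold SphereKoszulDual; infer_instance

instance (k : Type*) [Field k] (n : ℕ) (a : Fin n → k) :
    Algebra k (SphereKoszulDual k n a) := by
  unfold SphereKoszulDual; infer_instance

/-- The quotient map onto the Koszul dual algebra. -/
def sphereDualMk (k : Type*) [Field k] (n : ℕ) (a : Fin n → k) :
    FreeAlgebra k (Fin n) →ₐ[k] SphereKoszulDual k n a :=
  RingQuot.mkAlgHom k _

/-- For `n ≥ 2` and all `aᵢ ≠ 0`, the Koszul dual algebra
`A^! = T(v₁*,…,vₙ*)/(R^⊥)` is concentrated in weight gradings `0`, `1` and `2`: every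
monomial in the generators of weight `≥ 3` vanishes in the quotient; in particular every
weight-3 monomial `vᵢ* vⱼ* vₗ*` lies in the two-sided ideal generated by `R^⊥`. -/
theorem sphereKoszulDual_concentrated (k : Type*) [Field k] (n : ℕ) (hn : 2 ≤ n)
    (a : Fin n → k) (ha : ∀ i, a i ≠ 0) :
    (∀ l : List (Fin n), 3 ≤ l.length →
        sphereDualMk k n a ((l.map (ι k)).prod) = 0) ∧
    (∀ i j m : Fin n, sphereDualMk k n a (ι k i * ι k j * ι k m) = 0) := by
  set f := sphereDualMk k n a with hf
  have hrel : ∀ x : FreeAlgebra k (Fin n),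
      ((∃ i j : Fin n, i ≠ j ∧ x = ι k i * ι k j) ∨
       (∃ i j : Fin n, i ≠ j ∧
          x = a j • (ι k i * ι k i) - a i • (ι k j * ι k j))) →
      f x = 0 := by
    intro x hx
    have hr : (fun x y : FreeAlgebra k (Fin n) =>
        ((∃ i j : Fin n, i ≠ j ∧ x = ι k i * ι k j) ∨
         (∃ i j : Fin n, i ≠ j ∧
            x = a j • (ι k i * ι k i) - a i • (ι k j * ι k j))) ∧ y = 0) x 0 :=
      ⟨hx, rfl⟩
    have h : sphereDualMk k n a x = sphereDualMk k n a 0 :=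
      RingQuot.mkAlgHom_rel k hr
    rw [map_zero] at h
    exact h
  have hmul : ∀ i j : Fin n, i ≠ j → f (ι k i * ι k j) = 0 := by
    intro i j hij
    exact hrel _ (Or.inl ⟨i, j, hij, rfl⟩)
  have hsq : ∀ i j : Fin n, i ≠ j →
      a j • f (ι k i * ι k i) = a i • f (ι k j * ι k j) := by
    intro i j hij
    have h2 := hrel _ (Or.inr ⟨i, j, hij, rfl⟩)
    rw [map_sub, map_smul, map_smul, sub_eq_zero] at h2
    exact h2
  have htriple : ∀ i j m : Fin n, f (ι k i * ι k j * ι k m) = 0 := by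
    intro i j m
    by_cases hij : i = j
    · subst hij
      by_cases him : i = m
      · subst him
        haveI : Nontrivial (Fin n) := Fin.nontrivial_iff_two_le.mpr hn
        obtain ⟨p, hp⟩ := exists_ne i
        have key : a p • f (ι k i * ι k i * ι k i) = 0 := by
          rw [map_mul, ← smul_mul_assoc, hsq i p (Ne.symm hp), smul_mul_assoc]
          rw [map_mul, mul_assoc, ← map_mul, hmul p i hp]
          simp
        exact (smul_eq_zero.mp key).resolve_left (ha p)
      · rw [mul_assoc, map_mul, hmul i m him, mul_zero]
    · rw [map_mul, hmul i j hij, zero_mul]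
  refine ⟨?_, htriple⟩
  intro l hl
  match l, hl with
  | x :: y :: z :: t, _ =>
    have : ((x :: y :: z :: t).map (ι k)).prod
        = (ι k x * ι k y * ι k z) * ((t.map (ι k)).prod) := by
      simp [mul_assoc]
    rw [this, map_mul, htriple x y z, zero_mul]
end
end

section
/- Let R be a principal ideal domain, V a finitely generated free R-module, and R' ⊆ V⊗V a free rank-1 submodule generated by a non-singular anti-symmetric element. Then the quadratic algebra A(V,R') = T_R(V)/(R') is a free R-module. -/
open TensorProduct CategoryTheory

noncomputable section
universe u

/-- The linear map `V ⊗ V → T(V)` sending `v ⊗ w` to `ι v * ι w`. -/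
def muMap (k : Type*) [CommRing k] (V : Type*) [AddCommGroup V] [Module k V] :
    V ⊗[k] V →ₗ[k] TensorAlgebra k V :=
  TensorProduct.lift
    (((LinearMap.mul k (TensorAlgebra k V)).compl₂ (TensorAlgebra.ι k)) ∘ₗ TensorAlgebra.ι k)

/-- The relation presenting the quadratic algebra `A(V,R) = T(V)/(R)`. -/
def quadRel (k : Type*) [CommRing k] (V : Type*) [AddCommGroup V] [Module k V]
    (R : Submodule k (V ⊗[k] V)) : TensorAlgebra k V → TensorAlgebra k V → Prop :=
  fun x y => (∃ r ∈ R, x = muMap k V r) ∧ y = 0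

/-- The quadratic algebra `A(V,R) = T(V)/(R)`. -/
def QuadAlg (k : Type*) [CommRing k] (V : Type*) [AddCommGroup V] [Module k V]
    (R : Submodule k (V ⊗[k] V)) : Type _ :=
  RingQuot (quadRel k V R)

instance (k : Type*) [CommRing k] (V : Type*) [AddCommGroup V] [Module k V]
    (R : Submodule k (V ⊗[k] V)) : Ring (QuadAlg k V R) := by
  unfold QuadAlg; infer_instance

instance (k : Type*) [CommRing k] (V : Type*) [AddCommGroup V] [Module k V]
    (R : Submodule k (V ⊗[k] V)) : Algebra k (QuadAlg k V R) := by
  unfold QuadAlg; infer_instance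

/-- The quotient map `T(V) → A(V,R)`. -/
def quadMk (k : Type*) [CommRing k] (V : Type*) [AddCommGroup V] [Module k V]
    (R : Submodule k (V ⊗[k] V)) : TensorAlgebra k V →ₐ[k] QuadAlg k V R :=
  RingQuot.mkAlgHom k (quadRel k V R)

/-!
Take `f = b₀*`. The vector `y = (f ⊗ id) r = ∑ⱼ G₀ⱼ bⱼ` lies in `ker f` because `G₀₀ = 0`, and it is
unimodular because `G` is invertible. Over a PID this gives a basis `e` of `V` with `e₀ = b₀`,
`e₁ = y` and `e₀* = f`, in which the `0`-th row of the coefficient matrix of `r` is `(0, 1, 0, …)`.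
So `r = e₀ ⊗ e₁ + (terms eᵢ ⊗ eⱼ with i ≠ 0)`, and the leading word `e₀ e₁` cannot overlap itself.
By the diamond lemma the words in the `eᵢ` avoiding `e₀ e₁` form a basis of `A(V, R')`: they span
by rewriting `e₀ e₁`, and they are independent because the same rewriting defines an action of
`T(V)` on their free module in which `r` acts by `0`.
-/

open Module

section Contraction

variable {R : Type*} [CommRing R] {M N : Type*} [AddCommGroup M] [Module R M]
  [AddCommGroup N] [Module R N]

def TensorProduct.contractFst (f : Dual R M) : M ⊗[R] N →ₗ[R] N :=
  TensorProduct.lid R N ∘ₗ f.rTensor N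

@[simp]
theorem TensorProduct.contractFst_tmul (f : Dual R M) (x : M) (y : N) :
    contractFst f (x ⊗ₜ[R] y) = f x • y := by
  simp [contractFst]

theorem Module.Basis.tensorProduct_repr_apply {ι κ : Type*} (b : Basis ι R M)
    (c : Basis κ R N) (t : M ⊗[R] N) (i : ι) (j : κ) :
    (b.tensorProduct c).repr t (i, j) = c.repr (contractFst (b.coord i) t) j := by
  induction t using TensorProduct.induction_on with
  | zero => simp
  | tmul x y => simp [mul_comm]
  | add s t hs ht => simp [hs, ht]

variable {ι κ : Type*} [Fintype ι] [Fintype κ]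

theorem Module.Basis.tensorProduct_repr_sum [DecidableEq ι] [DecidableEq κ] (b : Basis ι R M)
    (c : Basis κ R N) (G : Matrix ι κ R) (i : ι) (j : κ) :
    (b.tensorProduct c).repr (∑ i, ∑ j, G i j • b i ⊗ₜ[R] c j) (i, j) = G i j := by
  simp [Finsupp.single_apply]

theorem Module.Basis.sum_tensorProduct_repr (b : Basis ι R M) (c : Basis κ R N)
    (t : M ⊗[R] N) :
    ∑ i, ∑ j, (b.tensorProduct c).repr t (i, j) • b i ⊗ₜ[R] c j = t := by
  conv_rhs => rw [← (b.tensorProduct c).sum_repr t, Fintype.sum_prod_type]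
  simp only [Basis.tensorProduct_apply]

theorem Module.Basis.exists_dual_apply_eq_one [DecidableEq ι] (b : Basis ι R M)
    {G : Matrix ι ι R} (hG : IsUnit G.det) (i : ι) {y : M} (hy : b.equivFun y = G i) :
    ∃ h : Dual R M, h y = 1 := by
  refine ⟨∑ k, G⁻¹ k i • b.coord k, ?_⟩
  have hGG := congrFun (congrFun (Matrix.mul_nonsing_inv G hG) i) i
  simp only [Matrix.mul_apply, Matrix.one_apply_eq] at hGG
  simp [← hGG, ← hy, mul_comm]

end Contraction

section BasisExtension

variable {R : Type*} [CommRing R] {M : Type*} [AddCommGroup M] [Module R M]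

theorem Module.Basis.exists_cons_of_apply_eq_one {n : ℕ} (g : Dual R M) {x : M}
    (hx : g x = 1) (d : Basis (Fin n) R (LinearMap.ker g)) :
    ∃ c : Basis (Fin (n + 1)) R M, c 0 = x ∧ (∀ i, c i.succ = d i) ∧ c.coord 0 = g := by
  have hli : ∀ (a : R), ∀ y ∈ LinearMap.ker g, a • x + y = 0 → a = 0 := by
    intro a y hy h
    simpa [hx, LinearMap.mem_ker.1 hy] using congrArg g h
  have hsp : ∀ z : M, ∃ a : R, z + a • x ∈ LinearMap.ker g :=
    fun z => ⟨-g z, by simp [hx]⟩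
  set c := Basis.mkFinCons x d hli hsp
  have hc0 : c 0 = x := by simp [c]
  have hcs : ∀ i, c i.succ = d i := by simp [c]
  refine ⟨c, hc0, hcs, c.ext fun i => ?_⟩
  refine Fin.cases ?_ (fun i => ?_) i
  · rw [Basis.coord_apply, c.repr_self, Finsupp.single_eq_same, hc0, hx]
  · rw [Basis.coord_apply, c.repr_self, Finsupp.single_apply, if_neg (Fin.succ_ne_zero i), hcs]
    exact (LinearMap.mem_ker.1 (d i).2).symm

theorem Module.Basis.exists_apply_one_eq_coord_zero_eq [IsDomain R] [IsPrincipalIdealRing R]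
    [Module.Free R M] [Module.Finite R M] (f h : Dual R M) {x y : M}
    (hfx : f x = 1) (hfy : f y = 0) (hhy : h y = 1) :
    ∃ (n : ℕ) (c : Basis (Fin (n + 2)) R M), c 1 = y ∧ c.coord 0 = f := by
  set h' : Dual R (LinearMap.ker f) := h ∘ₗ (LinearMap.ker f).subtype
  obtain ⟨c', hc'0, -, -⟩ := Basis.exists_cons_of_apply_eq_one (x := ⟨y, hfy⟩) h' hhy
    (Module.finBasis R (LinearMap.ker h'))
  obtain ⟨c, -, hcs, hcoord⟩ := Basis.exists_cons_of_apply_eq_one f hfx c'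
  exact ⟨_, c, by rw [show (1 : Fin _) = Fin.succ 0 from rfl, hcs, hc'0], hcoord⟩

theorem exists_basis_coeff_zero_one_eq_one [IsDomain R] [IsPrincipalIdealRing R] {m : ℕ}
    (b : Basis (Fin (m + 1)) R M) {G : Matrix (Fin (m + 1)) (Fin (m + 1)) R}
    (hdet : IsUnit G.det) (h00 : G 0 0 = 0) :
    ∃ (n : ℕ) (c : Basis (Fin (n + 2)) R M) (G' : Fin (n + 2) → Fin (n + 2) → R),
      G' 0 1 = 1 ∧ G' 0 0 = 0 ∧
        ∑ i, ∑ j, G i j • b i ⊗ₜ[R] b j = ∑ i, ∑ j, G' i j • c i ⊗ₜ[R] c j := by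
  have := Module.Free.of_basis b
  have := Module.Finite.of_basis b
  set y := contractFst (b.coord 0) (∑ i, ∑ j, G i j • b i ⊗ₜ[R] b j)
  have hy : b.equivFun y = G 0 := funext fun j => by
    rw [b.equivFun_apply, ← Basis.tensorProduct_repr_apply, Basis.tensorProduct_repr_sum]
  obtain ⟨h, hh⟩ := b.exists_dual_apply_eq_one hdet 0 hy
  have hfy : b.coord 0 y = 0 := by rw [Basis.coord_apply, ← b.equivFun_apply, hy, h00]
  obtain ⟨n, c, hc1, hcoord⟩ :=
    Basis.exists_apply_one_eq_coord_zero_eq (b.coord 0) h (x := b 0) (by simp) hfy hh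
  have hrow : ∀ j, (c.tensorProduct c).repr (∑ i, ∑ j, G i j • b i ⊗ₜ[R] b j) (0, j) =
      Finsupp.single 1 1 j := fun j => by
    rw [Basis.tensorProduct_repr_apply, hcoord, ← c.repr_self, hc1]
  exact ⟨n, c, fun i j => (c.tensorProduct c).repr _ (i, j),
    (hrow 1).trans Finsupp.single_eq_same, (hrow 0).trans (Finsupp.single_eq_of_ne (by simp)),
    (c.sum_tensorProduct_repr c _).symm⟩

end BasisExtension

section NormalWords

variable {R : Type*} [CommRing R] {ι : Type*} (p q : ι)

def IsNormalWord (l : List ι) : Prop := l.IsChain fun a b => ¬(a = p ∧ b = q)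

abbrev NormalWord : Type _ := {l : List ι // IsNormalWord p q l}

variable {p q}

theorem isNormalWord_nil : IsNormalWord p q [] := List.isChain_nil

theorem isNormalWord_cons_cons {a b : ι} {l : List ι} :
    IsNormalWord p q (a :: b :: l) ↔ ¬(a = p ∧ b = q) ∧ IsNormalWord p q (b :: l) :=
  List.isChain_cons_cons

theorem IsNormalWord.tail {a : ι} {l : List ι} (h : IsNormalWord p q (a :: l)) :
    IsNormalWord p q l :=
  List.IsChain.tail h

theorem IsNormalWord.cons_of_ne {a : ι} {l : List ι} (ha : a ≠ p) (h : IsNormalWord p q l) :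
    IsNormalWord p q (a :: l) :=
  List.isChain_cons.2 ⟨fun _ _ hab => ha hab.1, h⟩

variable (R p q)

open Classical in
def normalSingle (l : List ι) : NormalWord p q →₀ R :=
  if h : IsNormalWord p q l then Finsupp.single ⟨l, h⟩ 1 else 0

def prependLetter (i : ι) : (NormalWord p q →₀ R) →ₗ[R] (NormalWord p q →₀ R) :=
  Finsupp.linearCombination R fun w => normalSingle R p q (i :: w.1)

variable {R p q}

theorem normalSingle_of_isNormalWord {l : List ι} (h : IsNormalWord p q l) :
    normalSingle R p q l = Finsupp.single ⟨l, h⟩ 1 :=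
  dif_pos h

theorem normalSingle_of_not_isNormalWord {l : List ι} (h : ¬IsNormalWord p q l) :
    normalSingle R p q l = 0 :=
  dif_neg h

@[simp]
theorem prependLetter_single (i : ι) (w : NormalWord p q) :
    prependLetter R p q i (Finsupp.single w 1) = normalSingle R p q (i :: w.1) := by
  simp [prependLetter]

variable [Fintype ι] [DecidableEq ι]

variable (p q) in
/-- `consNormalForm G i l` is the normal form of the word `i :: l` for a normal word `l`,
obtained by rewriting `p q ↦ -∑ G a b • a b`; the summand `(a, b) = (p, q)` contributes
nothing because `prependLetter` kills the non-normal word `p q t`. -/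
def consNormalForm (G : ι → ι → R) : ι → List ι → (NormalWord p q →₀ R)
  | i, [] => normalSingle R p q [i]
  | i, x :: t =>
    if i = p ∧ x = q then -∑ a, ∑ b, G a b • prependLetter R p q a (consNormalForm G b t)
    else normalSingle R p q (i :: x :: t)

theorem consNormalForm_of_isNormalWord (G : ι → ι → R) {i : ι} {l : List ι}
    (h : IsNormalWord p q (i :: l)) : consNormalForm p q G i l = normalSingle R p q (i :: l) := by
  cases l with
  | nil => rfl
  | cons x t => exact if_neg (isNormalWord_cons_cons.1 h).1

theorem consNormalForm_cons_q (G : ι → ι → R) (t : List ι) :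
    consNormalForm p q G p (q :: t) =
      -∑ a, ∑ b, G a b • prependLetter R p q a (consNormalForm p q G b t) :=
  if_pos ⟨rfl, rfl⟩

variable (p q) in
def letterAction (G : ι → ι → R) (i : ι) : Module.End R (NormalWord p q →₀ R) :=
  Finsupp.linearCombination R fun w => consNormalForm p q G i w.1

@[simp]
theorem letterAction_single (G : ι → ι → R) (i : ι) (w : NormalWord p q) :
    letterAction p q G i (Finsupp.single w 1) = consNormalForm p q G i w.1 := by
  simp [letterAction]

theorem letterAction_of_ne (G : ι → ι → R) {i : ι} (hi : i ≠ p) :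
    letterAction p q G i = prependLetter R p q i := by
  unfold letterAction prependLetter
  congr 1
  funext w
  exact consNormalForm_of_isNormalWord G (w.2.cons_of_ne hi)

theorem letterAction_single_of_isNormalWord (G : ι → ι → R) {i : ι} {w : NormalWord p q}
    (h : IsNormalWord p q (i :: w.1)) :
    letterAction p q G i (Finsupp.single w 1) = Finsupp.single ⟨i :: w.1, h⟩ 1 := by
  rw [letterAction_single, consNormalForm_of_isNormalWord G h, normalSingle_of_isNormalWord h]

theorem smul_letterAction_letterAction_single (hpq : p ≠ q) {G : ι → ι → R}
    (h1 : G p q = 1) (h0 : G p p = 0) (w : NormalWord p q) (i j : ι) :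
    G i j • letterAction p q G i (letterAction p q G j (Finsupp.single w 1)) =
      G i j • prependLetter R p q i (consNormalForm p q G j w.1) +
        if i = p ∧ j = q then consNormalForm p q G p (q :: w.1) else 0 := by
  by_cases hj : j = p
  · subst hj
    by_cases hi : i = j
    · simp [hi, h0, hpq]
    · simp [hi, letterAction_of_ne G hi]
  · have hjw : IsNormalWord p q (j :: w.1) := w.2.cons_of_ne hj
    rw [letterAction_single_of_isNormalWord G hjw, letterAction_single,
      consNormalForm_of_isNormalWord G hjw, normalSingle_of_isNormalWord hjw,
      prependLetter_single]
    by_cases hij : i = p ∧ j = q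
    · obtain ⟨rfl, rfl⟩ := hij
      rw [normalSingle_of_not_isNormalWord fun h => (isNormalWord_cons_cons.1 h).1 ⟨rfl, rfl⟩]
      simp [h1]
    · rw [if_neg hij, add_zero, consNormalForm_of_isNormalWord G
        (isNormalWord_cons_cons.2 ⟨hij, hjw⟩)]

theorem sum_smul_letterAction_mul_letterAction (hpq : p ≠ q) {G : ι → ι → R}
    (h1 : G p q = 1) (h0 : G p p = 0) :
    ∑ i, ∑ j, G i j • (letterAction p q G i * letterAction p q G j) = 0 := by
  ext w : 2
  simp only [LinearMap.comp_apply, LinearMap.sum_apply, LinearMap.smul_apply, Module.End.mul_apply,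
    Finsupp.lsingle_apply, smul_letterAction_letterAction_single hpq h1 h0, Finset.sum_add_distrib,
    consNormalForm_cons_q]
  simp [ite_and]

end NormalWords

section QuadraticAlgebra

variable {R : Type*} [CommRing R] {V : Type*} [AddCommGroup V] [Module R V]

@[simp]
theorem muMap_tmul (x y : V) :
    muMap R V (x ⊗ₜ[R] y) = TensorAlgebra.ι R x * TensorAlgebra.ι R y := by
  simp [muMap]

theorem quadMk_surjective (W : Submodule R (V ⊗[R] V)) : Function.Surjective (quadMk R V W) :=
  RingQuot.mkAlgHom_surjective R _

@[simp]
theorem quadMk_muMap_self (r : V ⊗[R] V) : quadMk R V (Submodule.span R {r}) (muMap R V r) = 0 :=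
  (RingQuot.mkAlgHom_rel R ⟨⟨r, Submodule.mem_span_singleton_self r, rfl⟩, rfl⟩).trans
    (map_zero _)

def QuadAlg.liftSpan {A : Type*} [Semiring A] [Algebra R A] {r : V ⊗[R] V}
    (φ : TensorAlgebra R V →ₐ[R] A) (hφ : φ (muMap R V r) = 0) :
    QuadAlg R V (Submodule.span R {r}) →ₐ[R] A :=
  RingQuot.liftAlgHom R ⟨φ, by
    rintro x y ⟨⟨s, hs, rfl⟩, rfl⟩
    obtain ⟨a, rfl⟩ := Submodule.mem_span_singleton.1 hs
    simp [hφ]⟩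

@[simp]
theorem QuadAlg.liftSpan_quadMk {A : Type*} [Semiring A] [Algebra R A] {r : V ⊗[R] V}
    (φ : TensorAlgebra R V →ₐ[R] A) (hφ : φ (muMap R V r) = 0) (x : TensorAlgebra R V) :
    QuadAlg.liftSpan φ hφ (quadMk R V _ x) = φ x :=
  RingQuot.liftAlgHom_mkAlgHom_apply R _ _ _

theorem QuadAlg.free_span_zero [Module.Free R V] :
    Module.Free R (QuadAlg R V (Submodule.span R {0})) := by
  let e := AlgEquiv.ofAlgHom (QuadAlg.liftSpan (r := 0) (AlgHom.id R (TensorAlgebra R V)) (by simp))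
    (quadMk R V _) (by ext; simp) (by ext x; obtain ⟨x, rfl⟩ := quadMk_surjective _ x; simp)
  exact Module.Free.of_equiv e.symm.toLinearEquiv

end QuadraticAlgebra

section NormalWordBasis

variable {R : Type*} [CommRing R] {V : Type*} [AddCommGroup V] [Module R V]
  {ι : Type*} (c : Basis ι R V)

def tensorWord (l : List ι) : TensorAlgebra R V :=
  (l.map fun i => TensorAlgebra.ι R (c i)).prod

@[simp]
theorem tensorWord_nil : tensorWord c [] = 1 := rfl

@[simp]
theorem tensorWord_cons (i : ι) (l : List ι) :
    tensorWord c (i :: l) = TensorAlgebra.ι R (c i) * tensorWord c l := rfl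

theorem sum_smul_quadMk_tensorWord [Fintype ι] {G : ι → ι → R} {r : V ⊗[R] V}
    (hr : r = ∑ i, ∑ j, G i j • c i ⊗ₜ[R] c j) (t : List ι) :
    ∑ a, ∑ b, G a b • quadMk R V (Submodule.span R {r}) (tensorWord c (a :: b :: t)) = 0 := by
  have hT : ∑ a, ∑ b, G a b • tensorWord c (a :: b :: t) = muMap R V r * tensorWord c t := by
    simp [hr, Finset.sum_mul, mul_assoc]
  simp only [← map_smul, ← map_sum, hT, map_mul, quadMk_muMap_self, zero_mul]

variable (p q : ι)

def normalWordMap (r : V ⊗[R] V) :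
    (NormalWord p q →₀ R) →ₗ[R] QuadAlg R V (Submodule.span R {r}) :=
  Finsupp.linearCombination R fun w => quadMk R V _ (tensorWord c w.1)

variable {p q}

@[simp]
theorem normalWordMap_single (r : V ⊗[R] V) (w : NormalWord p q) :
    normalWordMap c p q r (Finsupp.single w 1) = quadMk R V _ (tensorWord c w.1) := by
  simp [normalWordMap]

theorem normalWordMap_normalSingle (r : V ⊗[R] V) {l : List ι} (hl : IsNormalWord p q l) :
    normalWordMap c p q r (normalSingle R p q l) = quadMk R V _ (tensorWord c l) := by
  rw [normalSingle_of_isNormalWord hl, normalWordMap_single]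

theorem normalWordMap_prependLetter_of_ne (r : V ⊗[R] V) {a : ι} (ha : a ≠ p)
    (m : NormalWord p q →₀ R) :
    normalWordMap c p q r (prependLetter R p q a m) =
      quadMk R V _ (TensorAlgebra.ι R (c a)) * normalWordMap c p q r m := by
  induction m using Finsupp.induction_linear with
  | zero => simp
  | add m₁ m₂ h₁ h₂ => simp only [map_add, h₁, h₂, mul_add]
  | single w b =>
    rw [← mul_one b, ← smul_eq_mul, ← Finsupp.smul_single]
    simp only [map_smul, prependLetter_single, normalWordMap_normalSingle c r (w.2.cons_of_ne ha),
      normalWordMap_single, mul_smul_comm, tensorWord_cons, map_mul]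

variable [Fintype ι] [DecidableEq ι] (p q) (G : ι → ι → R)

def wordAction : TensorAlgebra R V →ₐ[R] Module.End R (NormalWord p q →₀ R) :=
  TensorAlgebra.lift R (c.constr R (letterAction p q G))

@[simp]
theorem wordAction_ι_basis (i : ι) :
    wordAction c p q G (TensorAlgebra.ι R (c i)) = letterAction p q G i := by
  simp [wordAction]

theorem wordAction_tensorWord {l : List ι} (hl : IsNormalWord p q l) :
    wordAction c p q G (tensorWord c l) (Finsupp.single ⟨[], isNormalWord_nil⟩ 1) =
      Finsupp.single ⟨l, hl⟩ 1 := by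
  induction l with
  | nil => simp
  | cons i t ih =>
    rw [tensorWord_cons, map_mul, Module.End.mul_apply, ih hl.tail, wordAction_ι_basis,
      letterAction_single_of_isNormalWord G hl]

variable {p q G}

theorem wordAction_muMap (hpq : p ≠ q) (h1 : G p q = 1) (h0 : G p p = 0) :
    wordAction c p q G (muMap R V (∑ i, ∑ j, G i j • c i ⊗ₜ[R] c j)) = 0 := by
  simpa using sum_smul_letterAction_mul_letterAction hpq h1 h0

theorem smul_quadMk_tensorWord_cons_cons (hpq : p ≠ q) (h1 : G p q = 1) (h0 : G p p = 0)
    (r : V ⊗[R] V) {t : List ι} (ht : IsNormalWord p q t)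
    (ih : ∀ b,
      normalWordMap c p q r (consNormalForm p q G b t) = quadMk R V _ (tensorWord c (b :: t)))
    (a b : ι) :
    G a b • quadMk R V _ (tensorWord c (a :: b :: t)) =
      G a b • normalWordMap c p q r (prependLetter R p q a (consNormalForm p q G b t)) +
        if a = p ∧ b = q then quadMk R V _ (tensorWord c (p :: q :: t)) else 0 := by
  by_cases ha : a = p
  · subst a
    by_cases hb : b = p
    · subst b
      simp [h0, hpq]
    rw [consNormalForm_of_isNormalWord G (ht.cons_of_ne hb),
      normalSingle_of_isNormalWord (ht.cons_of_ne hb), prependLetter_single]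
    by_cases hbq : b = q
    · subst b
      rw [normalSingle_of_not_isNormalWord fun h => (isNormalWord_cons_cons.1 h).1 ⟨rfl, rfl⟩]
      simp [h1]
    · rw [normalWordMap_normalSingle c r
        (isNormalWord_cons_cons.2 ⟨fun h => hbq h.2, ht.cons_of_ne hb⟩)]
      simp [hbq]
  · rw [normalWordMap_prependLetter_of_ne c r ha, ih b, ← map_mul, ← tensorWord_cons,
      if_neg fun h => ha h.1, add_zero]

theorem normalWordMap_consNormalForm {r : V ⊗[R] V} (hr : r = ∑ i, ∑ j, G i j • c i ⊗ₜ[R] c j)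
    (hpq : p ≠ q) (h1 : G p q = 1) (h0 : G p p = 0) {l : List ι} (hl : IsNormalWord p q l) (i : ι) :
    normalWordMap c p q r (consNormalForm p q G i l) = quadMk R V _ (tensorWord c (i :: l)) := by
  induction l generalizing i with
  | nil => exact normalWordMap_normalSingle c r (List.isChain_singleton i)
  | cons x t ih =>
    by_cases hn : IsNormalWord p q (i :: x :: t)
    · rw [consNormalForm_of_isNormalWord G hn, normalWordMap_normalSingle c r hn]
    obtain ⟨hi, hx⟩ : i = p ∧ x = q := by_contra fun h => hn (isNormalWord_cons_cons.2 ⟨h, hl⟩)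
    subst i x
    have hsum := sum_smul_quadMk_tensorWord c hr t
    simp only [smul_quadMk_tensorWord_cons_cons c hpq h1 h0 r hl.tail (ih hl.tail),
      Finset.sum_add_distrib, ite_and, Finset.sum_ite_irrel, Finset.sum_const_zero,
      Finset.sum_ite_eq', Finset.mem_univ, if_true] at hsum
    rw [consNormalForm_cons_q, map_neg]
    simp only [map_sum, map_smul]
    exact neg_eq_of_add_eq_zero_right hsum

theorem normalWordMap_letterAction {r : V ⊗[R] V} (hr : r = ∑ i, ∑ j, G i j • c i ⊗ₜ[R] c j)
    (hpq : p ≠ q) (h1 : G p q = 1) (h0 : G p p = 0) (i : ι) (m : NormalWord p q →₀ R) :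
    normalWordMap c p q r (letterAction p q G i m) =
      quadMk R V _ (TensorAlgebra.ι R (c i)) * normalWordMap c p q r m := by
  induction m using Finsupp.induction_linear with
  | zero => simp
  | add m₁ m₂ h₁ h₂ => simp only [map_add, h₁, h₂, mul_add]
  | single w b =>
    rw [← mul_one b, ← smul_eq_mul, ← Finsupp.smul_single]
    simp only [map_smul, letterAction_single, normalWordMap_consNormalForm c hr hpq h1 h0 w.2,
      normalWordMap_single, mul_smul_comm, tensorWord_cons, map_mul]

theorem normalWordMap_wordAction {r : V ⊗[R] V} (hr : r = ∑ i, ∑ j, G i j • c i ⊗ₜ[R] c j)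
    (hpq : p ≠ q) (h1 : G p q = 1) (h0 : G p p = 0) (x : TensorAlgebra R V)
    (m : NormalWord p q →₀ R) :
    normalWordMap c p q r (wordAction c p q G x m) = quadMk R V _ x * normalWordMap c p q r m := by
  induction x using TensorAlgebra.induction generalizing m with
  | algebraMap a => simp [Algebra.smul_def]
  | ι v =>
    have hv := c.mem_span v
    induction hv using Submodule.span_induction generalizing m with
    | mem v hv =>
      obtain ⟨i, rfl⟩ := hv
      rw [wordAction_ι_basis, normalWordMap_letterAction c hr hpq h1 h0]
    | zero => simp
    | add v w _ _ hv hw => simp only [map_add, LinearMap.add_apply, hv, hw, add_mul]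
    | smul a v _ hv => simp only [map_smul, LinearMap.smul_apply, hv, smul_mul_assoc]
  | mul x y hx hy => rw [map_mul, Module.End.mul_apply, hx, hy, map_mul, mul_assoc]
  | add x y hx hy => simp only [map_add, LinearMap.add_apply, hx, hy, add_mul]

end NormalWordBasis

theorem QuadAlg.free_of_coeff_eq_one {R : Type*} [CommRing R] {V : Type*} [AddCommGroup V]
    [Module R V] {ι : Type*} [Fintype ι] [DecidableEq ι] (c : Basis ι R V) {p q : ι} (hpq : p ≠ q)
    {G : ι → ι → R} (h1 : G p q = 1) (h0 : G p p = 0) {r : V ⊗[R] V}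
    (hr : r = ∑ i, ∑ j, G i j • c i ⊗ₜ[R] c j) :
    Module.Free R (QuadAlg R V (Submodule.span R {r})) := by
  let ρ := QuadAlg.liftSpan (wordAction c p q G) (hr ▸ wordAction_muMap c hpq h1 h0)
  let Ψ := LinearMap.applyₗ (Finsupp.single ⟨[], isNormalWord_nil⟩ 1) ∘ₗ ρ.toLinearMap
  refine Module.Free.of_equiv (LinearEquiv.ofLinearMap (f := normalWordMap c p q r) (g := Ψ) ?_ ?_)
  · refine LinearMap.ext fun y => ?_
    obtain ⟨x, rfl⟩ := quadMk_surjective _ y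
    simp [Ψ, ρ, normalWordMap_wordAction c hr hpq h1 h0]
  · ext w : 2
    simpa [Ψ, ρ] using wordAction_tensorWord c p q G w.2

theorem quadAlg_free_of_antisymmetric_general (R : Type*) [CommRing R] [IsDomain R]
    [IsPrincipalIdealRing R] (V : Type*) [AddCommGroup V] [Module R V]
    (m : ℕ) (b : Module.Basis (Fin m) R V) (G : Matrix (Fin m) (Fin m) R)
    (hdet : IsUnit G.det) (hdiag : ∀ i, G i i = 0)
    (r : V ⊗[R] V) (hr : r = ∑ i : Fin m, ∑ j : Fin m, G i j • (b i ⊗ₜ[R] b j)) :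
    Module.Free R (QuadAlg R V (Submodule.span R {r})) := by
  cases m with
  | zero =>
    have := Module.Free.of_basis b
    rw [hr, Fin.sum_univ_zero]
    exact QuadAlg.free_span_zero
  | succ m =>
    obtain ⟨n, c, G', h1, h0, hc⟩ := exists_basis_coeff_zero_one_eq_one b hdet (hdiag 0)
    exact QuadAlg.free_of_coeff_eq_one c (by simp) h1 h0 (hr.trans hc)

/-- Let `R` be a PID, `V` a finitely generated free `R`-module and
`R' = R·r ⊆ V ⊗ V` a free rank-1 submodule generated by a non-singular anti-symmetric
element `r` (its coefficient matrix `G` in a basis is skew-symmetric with zero diagonal and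
has invertible determinant). Then the quadratic algebra `A(V,R') = T(V)/(R')` is a free
`R`-module. -/
theorem quadAlg_free_of_antisymmetric (R : Type*) [CommRing R] [IsDomain R]
    [IsPrincipalIdealRing R] (V : Type*) [AddCommGroup V] [Module R V]
    (m : ℕ) (b : Module.Basis (Fin m) R V) (G : Matrix (Fin m) (Fin m) R)
    (hdet : IsUnit G.det) (hskew : G.transpose = -G) (hdiag : ∀ i, G i i = 0)
    (r : V ⊗[R] V) (hr : r = ∑ i : Fin m, ∑ j : Fin m, G i j • (b i ⊗ₜ[R] b j)) :
    Module.Free R (QuadAlg R V (Submodule.span R {r})) :=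
  quadAlg_free_of_antisymmetric_general R V m b G hdet hdiag r hr
end
end

section
/- Define integers l_d for d ≥ 1 by the identity of formal power series ∏_{d≥1} (1 − t^d)^{−l_d} = 1/(1 − r t + t^2) over Q. Then l_m = Σ_{c | m} (μ(c)/c) · Σ_{a + 2b = m/c} (−1)^b · binom(a+b, b) · r^a/(a+b), where μ is the Möbius function. -/
/-
Möbius inversion solves `-m λ_m = Σ_{d ∣ m} d l_d` for `l_m`. The explicit form of `λ_n`
comes from expanding `log(1 - u)` with `u = t (r - t)`: the coefficient of `t^n` in `u^j` is
`(-1)^(n-j) C(j, n-j) r^(2j-n)`, and `b = n - j` is the exponent of `-t` in the expansion.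
-/

noncomputable section

/-- The coefficient of `t^m` in the formal power series `log(1 − r t + t²)`, defined via
`log(1−u) = −Σ_{j≥1} u^j/j` with `u = r t − t²`; since `u` has positive order, only the
terms with `j ≤ m` contribute to the coefficient of `t^m`. -/
def logCoeff (r : ℚ) (m : ℕ) : ℚ :=
  -∑ j ∈ Finset.Icc 1 m,
      (1 / (j : ℚ)) *
        PowerSeries.coeff m ((PowerSeries.C r * PowerSeries.X - PowerSeries.X ^ 2) ^ j)

open Finset PowerSeries

theorem PowerSeries.coeff_X_add_C_pow {R : Type*} [CommSemiring R] (r : R) (n k : ℕ) :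
    coeff k ((X + C r) ^ n) = r ^ (n - k) * n.choose k := by
  simpa [← Polynomial.coeff_coe] using Polynomial.coeff_X_add_C_pow r n k

theorem PowerSeries.coeff_C_sub_X_pow {R : Type*} [CommRing R] (r : R) (n k : ℕ) :
    coeff k ((C r - X) ^ n) = (-1) ^ k * n.choose k * r ^ (n - k) := by
  have : rescale (-1 : R) (X + C r) = C r - X := by
    ext k
    rw [coeff_rescale]
    rcases k with _ | _ | k <;> simp [coeff_X]
  rw [← this, ← map_pow, coeff_rescale, coeff_X_add_C_pow]
  ring

theorem PowerSeries.coeff_C_mul_X_sub_X_sq_pow {R : Type*} [CommRing R] (r : R) {n j : ℕ}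
    (hj : j ≤ n) :
    coeff n ((C r * X - X ^ 2) ^ j) = (-1) ^ (n - j) * j.choose (n - j) * r ^ (2 * j - n) := by
  have : C r * X - X ^ 2 = X * (C r - X) := by ring
  rw [this, mul_pow, coeff_X_pow_mul', if_pos hj, coeff_C_sub_X_pow,
    show j - (n - j) = 2 * j - n by omega]

theorem neg_logCoeff_eq_sum (r : ℚ) {n : ℕ} (hn : 1 ≤ n) :
    -logCoeff r n = ∑ b ∈ range (n / 2 + 1),
      (-1) ^ b * ((n - b).choose b : ℚ) * r ^ (n - 2 * b) / ((n - b : ℕ) : ℚ) := by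
  have hreindex : ∑ j ∈ Icc 1 n, 1 / (j : ℚ) * coeff n ((C r * X - X ^ 2) ^ j) =
      ∑ b ∈ range n,
        (-1) ^ b * ((n - b).choose b : ℚ) * r ^ (n - 2 * b) / ((n - b : ℕ) : ℚ) := by
    refine sum_nbij' (n - ·) (n - ·) ?_ ?_ ?_ ?_ fun j hj => ?_
    any_goals (intro j hj; simp only [mem_Icc, mem_range] at hj ⊢; omega)
    have hjn := (mem_Icc.mp hj).2
    rw [coeff_C_mul_X_sub_X_sq_pow r hjn, Nat.sub_sub_self hjn, one_div_mul_eq_div,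
      show 2 * j - n = n - 2 * (n - j) by omega]
  rw [logCoeff, neg_neg, hreindex]
  refine (sum_subset (fun b hb => ?_) fun b hb hb' => ?_).symm
  · simp only [mem_range] at hb ⊢; omega
  · simp only [mem_range, not_lt] at hb hb'
    simp [Nat.choose_eq_zero_of_lt (show n - b < b by omega)]

theorem eq_sum_moebius_of_eq_neg_inv_mul_sum {K : Type*} [Field K] [CharZero K] {f g : ℕ → K}
    (h : ∀ m : ℕ, 1 ≤ m → g m = -(1 / (m : K)) * ∑ d ∈ m.divisors, (d : K) * f d)
    {m : ℕ} (hm : 1 ≤ m) :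
    f m = ∑ c ∈ m.divisors, ((ArithmeticFunction.moebius c : K) / c) * -g (m / c) := by
  have hsum : ∀ n : ℕ, 0 < n → ∑ d ∈ n.divisors, (d : K) * f d = -(n : K) * g n := by
    intro n hn
    have hn0 : (n : K) ≠ 0 := Nat.cast_ne_zero.mpr hn.ne'
    rw [h n hn]
    field_simp
  have hinv := ArithmeticFunction.sum_eq_iff_sum_smul_moebius_eq.mp hsum m hm
  rw [Nat.sum_divisorsAntidiagonal
    (fun c e => ArithmeticFunction.moebius c • (-(e : K) * g e))] at hinv
  have hm0 : (m : K) ≠ 0 := Nat.cast_ne_zero.mpr (by omega)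
  rw [← mul_right_inj' hm0, ← hinv, mul_sum]
  refine sum_congr rfl fun c hc => ?_
  have hc0 : (c : K) ≠ 0 := Nat.cast_ne_zero.mpr (Nat.pos_of_mem_divisors hc).ne'
  rw [Nat.cast_div (Nat.dvd_of_mem_divisors hc) hc0, zsmul_eq_mul]
  field_simp

/-- Let `r` be an integer and let the integers `l_d` be defined by the
formal power series identity `∏_{d≥1} (1 − t^d)^{−l_d} = 1/(1 − r t + t²)`; equivalently,
taking logarithms, the coefficient `λ_m` of `t^m` in `log(1 − r t + t²)` satisfies
`λ_m = −(1/m) Σ_{d ∣ m} d·l_d` for all `m ≥ 1`.  Then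
`l_m = Σ_{c ∣ m} (μ(c)/c) Σ_{a+2b=m/c} (−1)^b C(a+b,b) r^a/(a+b)`. -/
theorem lyndon_dimension_formula (r : ℤ) (l : ℕ → ℤ)
    (hl : ∀ m : ℕ, 1 ≤ m →
      logCoeff (r : ℚ) m = -(1 / (m : ℚ)) * ∑ d ∈ m.divisors, (d : ℚ) * (l d : ℚ)) :
    ∀ m : ℕ, 1 ≤ m →
      (l m : ℚ) =
        ∑ c ∈ m.divisors,
          ((ArithmeticFunction.moebius c : ℚ) / (c : ℚ)) *
            ∑ b ∈ Finset.range (m / c / 2 + 1),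
              ((-1 : ℚ) ^ b * (Nat.choose (m / c - b) b : ℚ) * (r : ℚ) ^ (m / c - 2 * b)) /
                ((m / c - b : ℕ) : ℚ) := by
  intro m hm
  rw [eq_sum_moebius_of_eq_neg_inv_mul_sum (f := fun d => (l d : ℚ)) hl hm]
  refine sum_congr rfl fun c hc => ?_
  rw [← neg_logCoeff_eq_sum _ (Nat.div_pos (Nat.divisor_le hc) (Nat.pos_of_mem_divisors hc))]
end
end

section
/- The coefficient of t^m in the formal power series log(1 − r t + t^2) over Q equals −Σ_{a + 2b = m} (−1)^b · binom(a+b, b) · r^a/(a+b), where the sum runs over nonnegative integers a, b with a + 2b = m (and m ≥ 1). -/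
/-!
Since `r t - t² = t (r - t)`, the binomial theorem gives the coefficient of `t^m` in
`(r t - t²)^j` as `(-1)^(m-j) C(j, m-j) r^(2j-m)`, which vanishes unless `m/2 ≤ j ≤ m`.
Writing `j = a + b` with `b = m - j` turns the remaining terms of `-Σ_j u^j / j` into the
claimed sum over `a + 2b = m`.
-/

noncomputable section

namespace PowerSeries

theorem coeff_pow_C_mul_X_sub_X_sq {R : Type*} [CommRing R] (r : R) {m j : ℕ} (hj : j ≤ m) :
    coeff m ((C r * X - X ^ 2 : R⟦X⟧) ^ j) =
      (-1) ^ (m - j) * j.choose (m - j) * r ^ (2 * j - m) := by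
  have hfactor : (C r * X - X ^ 2 : R⟦X⟧) ^ j = X ^ j * (-X + C r) ^ j := by
    rw [← mul_pow]
    ring
  have hterm : ∀ k, (-X) ^ k * C r ^ (j - k) * (j.choose k : R⟦X⟧) =
      C ((-1) ^ k * j.choose k * r ^ (j - k)) * X ^ k := by
    intro k
    simp only [map_mul, map_pow, map_neg, map_one, map_natCast]
    ring
  rw [hfactor, coeff_X_pow_mul', if_pos hj, add_pow, map_sum]
  simp only [hterm, coeff_C_mul_X_pow]
  rw [Finset.sum_ite_eq]
  split_ifs with hmj
  · rw [show j - (m - j) = 2 * j - m by omega]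
  · rw [Finset.mem_range] at hmj
    rw [Nat.choose_eq_zero_of_lt (by omega), Nat.cast_zero, mul_zero, zero_mul]

end PowerSeries

namespace Finset

theorem sum_Icc_one_eq_sum_range_half_sub {M : Type*} [AddCommMonoid M] (f : ℕ → M) {m : ℕ}
    (hm : 1 ≤ m) (hf : ∀ j, 2 * j < m → f j = 0) :
    ∑ j ∈ Icc 1 m, f j = ∑ b ∈ range (m / 2 + 1), f (m - b) := by
  have hinj : Set.InjOn (m - ·) (range (m / 2 + 1)) := by
    intro a ha b hb h
    simp only [coe_range, Set.mem_Iio] at ha hb h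
    omega
  rw [← sum_image hinj]
  refine (sum_subset ?_ ?_).symm
  · intro j hj
    obtain ⟨b, hb, rfl⟩ := mem_image.1 hj
    rw [mem_range] at hb
    rw [mem_Icc]
    omega
  · intro j hj hj_not
    rw [mem_Icc] at hj
    apply hf
    by_contra! h
    exact hj_not (mem_image.2 ⟨m - j, mem_range.2 (by omega), by omega⟩)

end Finset

open PowerSeries in
/-- For `m ≥ 1`, the coefficient of `t^m` in `log(1 − r t + t²)` equals
`−Σ_{a+2b=m} (−1)^b · C(a+b, b) · r^a/(a+b)`, the sum running over nonnegative integers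
`a, b` with `a + 2b = m` (parametrized by `b ≤ m/2`, with `a = m − 2b`, `a + b = m − b`). -/
theorem logCoeff_formula (r : ℚ) (m : ℕ) (hm : 1 ≤ m) :
    logCoeff r m =
      -∑ b ∈ Finset.range (m / 2 + 1),
          ((-1 : ℚ) ^ b * (Nat.choose (m - b) b : ℚ) * r ^ (m - 2 * b)) / ((m - b : ℕ) : ℚ) := by
  have hvanish : ∀ j, 2 * j < m → 1 / (j : ℚ) * coeff m ((C r * X - X ^ 2) ^ j) = 0 := by
    intro j hj
    rw [coeff_pow_C_mul_X_sub_X_sq r (by omega), Nat.choose_eq_zero_of_lt (by omega)]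
    simp
  rw [logCoeff, neg_inj, Finset.sum_Icc_one_eq_sum_range_half_sub _ hm hvanish]
  refine Finset.sum_congr rfl fun b hb => ?_
  rw [Finset.mem_range] at hb
  rw [coeff_pow_C_mul_X_sub_X_sq r (Nat.sub_le m b), show m - (m - b) = b by omega,
    show 2 * (m - b) - m = m - 2 * b by omega]
  ring
end
end

section
/- Let r ≥ 3 and n ≥ 2, and define m_d for d ≥ 1 by the formal power series identity ∏_{i odd} (1+t^i)^{m_i} / ∏_{i even} (1−t^i)^{m_i} = 1/(1 − r t^{n−1} + t^{2n−2}). Then m_{d} = 0 unless (n−1) | d, there are polynomials p_j in r with p_j(r) = m_{j(n−1)} and leading term r^j/j, and lim_{j→∞} p_j(r)^{1/j} = (r + √(r²−4))/2 > 1. In particular the m_d are not eventually zero. -/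
/-!
Write `q = n - 1` and `G = 1 - r t^q + t^{2q} = (1 - α t^q)(1 - α⁻¹ t^q)`, where
`α = (r + √(r² - 4))/2`. Writing `1 + t^i = 1 - (-1)^i t^i` for odd `i` and
`1 - t^i = 1 - (-1)^i t^i` for even `i`, the product identity reads
`G · ∏_{i odd} (1 - (-1)^i t^i)^{m_i} = ∏_{i even} (1 - (-1)^i t^i)^{m_i}`, and comparing the
coefficients of `t^{N-1}` in the logarithmic derivatives of both sides gives, for `N ≥ 1`,

  `∑_{i ∣ N} (-1)^{N+i} i m_i = q L_{N/q}` if `q ∣ N`, and `0` otherwise,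

where `L_j = α^j + α^{-j}` is the value at `r` of the Dickson (Vieta–Lucas) polynomial `D_j`.
By induction, `m_d = 0` for `q ∤ d`; for `d = jq` the identity becomes
`j m_{jq} = L_j - ∑_{a ∣ j, a < j} ± a m_{aq}`, which defines polynomials `p_j = (D_j - ⋯)/j` with
`p_j(r) = m_{jq}`. Since `α ≥ 2`, the proper divisor sum is `O(α^{j/2})`, so `j m_{jq}` lies
between `α^j / 2` and `4 α^j` for large `j`, and `m_{jq}^{1/j} → α`.
-/

noncomputable section

open PowerSeries Filter Topology

namespace Polynomial

variable {R : Type*} [CommRing R]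

theorem natDegree_dickson_one_one_le (n : ℕ) : (dickson 1 (1 : R) n).natDegree ≤ n := by
  induction n using Nat.twoStepInduction with
  | zero => exact (natDegree_sub_le _ _).trans (by simp)
  | one => exact dickson_one (R := R) 1 1 ▸ natDegree_X_le
  | more n ih₁ ih₂ =>
    rw [dickson_add_two, C_1, one_mul]
    refine (natDegree_sub_le _ _).trans (max_le ?_ (by omega))
    exact natDegree_mul_le.trans (by have := natDegree_X_le (R := R); omega)

theorem dickson_one_one_monic_and_natDegree_eq [Nontrivial R] {n : ℕ} (hn : 0 < n) :
    (dickson 1 (1 : R) n).Monic ∧ (dickson 1 (1 : R) n).natDegree = n := by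
  induction n using Nat.strong_induction_on with
  | _ n ih =>
    rcases n with _ | _ | n
    · omega
    · simp
    · obtain ⟨hmon, hdeg⟩ := ih (n + 1) (by omega) (by omega)
      have hXmon : (X * dickson 1 (1 : R) (n + 1)).Monic := monic_X.mul hmon
      have hlt : (dickson 1 (1 : R) n).natDegree < (X * dickson 1 (1 : R) (n + 1)).natDegree := by
        rw [monic_X.natDegree_mul hmon, natDegree_X, hdeg]
        have := natDegree_dickson_one_one_le (R := R) n
        omega
      rw [dickson_add_two, C_1, one_mul]
      refine ⟨hXmon.sub_of_left (degree_lt_degree hlt), ?_⟩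
      rw [natDegree_sub_eq_left_of_natDegree_lt hlt, monic_X.natDegree_mul hmon, natDegree_X, hdeg]
      omega

theorem eval_intCast_dickson {S : Type*} [CommRing S] (k : ℕ) (a x : ℤ) (n : ℕ) :
    (dickson k (a : S) n).eval (x : S) = (((dickson k a n).eval x : ℤ) : S) := by
  simpa [map_dickson] using eval_intCast_map (Int.castRingHom S) (dickson k a n) x

end Polynomial

namespace Nat

theorem le_div_two_of_mem_properDivisors {a j : ℕ} (h : a ∈ j.properDivisors) : a ≤ j / 2 := by
  obtain ⟨⟨k, rfl⟩, hlt⟩ := mem_properDivisors.1 h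
  have : 2 ≤ k := by
    rcases k with _ | _ | k
    · simp at hlt
    · simp at hlt
    · omega
  exact (le_div_iff_mul_le two_pos).2 (by nlinarith)

theorem sum_divisors_mul_right_eq {M : Type*} [AddCommMonoid M] {q : ℕ} (hq : 0 < q)
    (f : ℕ → M) (hf : ∀ i, ¬ q ∣ i → f i = 0) (j : ℕ) :
    ∑ i ∈ (j * q).divisors, f i = ∑ a ∈ j.divisors, f (a * q) := by
  rw [← Finset.sum_image fun a _ b _ h => eq_of_mul_eq_mul_right hq h]
  symm
  refine Finset.sum_subset (fun i hi => ?_) fun i hi hi' => hf i fun ⟨a, ha⟩ => hi' ?_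
  · obtain ⟨a, ha, rfl⟩ := Finset.mem_image.1 hi
    obtain ⟨haj, hj⟩ := mem_divisors.1 ha
    exact mem_divisors.2 ⟨mul_dvd_mul_right haj q, by positivity⟩
  · obtain ⟨hij, hj⟩ := mem_divisors.1 hi
    subst ha
    rw [mul_comm q a] at hij ⊢
    exact Finset.mem_image_of_mem _
      (mem_divisors.2 ⟨Nat.dvd_of_mul_dvd_mul_right hq hij, fun h => hj (by simp [h])⟩)

end Nat

def DivisorIdentity (q : ℕ) (L : ℕ → ℤ) (m : ℕ → ℕ) : Prop :=
  ∀ N, 0 < N → ∑ i ∈ N.divisors, (-1 : ℤ) ^ (N + i) * (i * m i) =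
    if q ∣ N then q * L (N / q) else 0

namespace DivisorIdentity

variable {q : ℕ} {L : ℕ → ℤ} {m : ℕ → ℕ}

theorem eq_zero_of_not_dvd (hm : DivisorIdentity q L m) {d : ℕ} (hd : 0 < d) (hqd : ¬ q ∣ d) :
    m d = 0 := by
  induction d using Nat.strong_induction_on with
  | _ d ih =>
    have h := hm d hd
    rw [if_neg hqd, ← Nat.insert_self_properDivisors hd.ne', Finset.sum_insert
      Nat.self_notMem_properDivisors, Finset.sum_eq_zero fun i hi => ?_, add_zero, ← two_mul,
      pow_mul, neg_one_sq, one_pow, one_mul] at h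
    · exact_mod_cast (mul_eq_zero.1 h).resolve_left (by exact_mod_cast hd.ne')
    · obtain ⟨hid, hlt⟩ := Nat.mem_properDivisors.1 hi
      rw [ih i hlt (Nat.pos_of_dvd_of_pos hid hd) fun h => hqd (h.trans hid)]
      simp

theorem sum_divisors_eq (hm : DivisorIdentity q L m) (hq : 0 < q) {j : ℕ} (hj : 0 < j) :
    ∑ a ∈ j.divisors, (-1 : ℤ) ^ (j * q + a * q) * (a * m (a * q)) = L j := by
  have hvanish : ∀ i, ¬ q ∣ i → (-1 : ℤ) ^ (j * q + i) * (i * m i) = 0 := fun i hi => by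
    rw [hm.eq_zero_of_not_dvd (Nat.pos_of_ne_zero (by rintro rfl; exact hi (dvd_zero q))) hi]
    simp
  have h := hm (j * q) (by positivity)
  rw [if_pos (dvd_mul_left q j), Nat.mul_div_cancel _ hq,
    Nat.sum_divisors_mul_right_eq hq _ hvanish j] at h
  refine mul_left_cancel₀ (show (q : ℤ) ≠ 0 by exact_mod_cast hq.ne') ?_
  rw [← h, Finset.mul_sum]
  refine Finset.sum_congr rfl fun a _ => ?_
  push_cast
  ring

theorem mul_eq_sub_sum_properDivisors (hm : DivisorIdentity q L m) (hq : 0 < q) {j : ℕ}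
    (hj : 0 < j) :
    (j * m (j * q) : ℤ) =
      L j - ∑ a ∈ j.properDivisors, (-1 : ℤ) ^ (j * q + a * q) * (a * m (a * q)) := by
  rw [← hm.sum_divisors_eq hq hj, ← Nat.insert_self_properDivisors hj.ne',
    Finset.sum_insert Nat.self_notMem_properDivisors, ← two_mul, pow_mul, neg_one_sq, one_pow,
    one_mul, add_sub_cancel_right]

theorem abs_mul_sub_le_sum_properDivisors (hm : DivisorIdentity q L m) (hq : 0 < q) {j : ℕ}
    (hj : 0 < j) :
    |(j * m (j * q) : ℝ) - L j| ≤ ∑ a ∈ j.properDivisors, (a * m (a * q) : ℝ) := by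
  have h := congrArg (Int.cast : ℤ → ℝ) (hm.mul_eq_sub_sum_properDivisors hq hj)
  push_cast at h
  rw [h, sub_sub_cancel_left, abs_neg]
  refine (Finset.abs_sum_le_sum_abs _ _).trans (le_of_eq (Finset.sum_congr rfl fun a _ => ?_))
  simp [abs_mul]

end DivisorIdentity

namespace PowerSeries

variable {K : Type*} [Field K]

def logDerivative (f : K⟦X⟧) : K⟦X⟧ := d⁄dX K f * f⁻¹

theorem logDerivative_mul {f g : K⟦X⟧} (hf : constantCoeff f ≠ 0) (hg : constantCoeff g ≠ 0) :
    logDerivative (f * g) = logDerivative f + logDerivative g := by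
  simp only [logDerivative, Derivation.leibniz, PowerSeries.mul_inv_rev, smul_eq_mul]
  linear_combination (d⁄dX K g * g⁻¹) * PowerSeries.mul_inv_cancel f hf +
    (d⁄dX K f * f⁻¹) * PowerSeries.mul_inv_cancel g hg

theorem logDerivative_pow {f : K⟦X⟧} (hf : constantCoeff f ≠ 0) (k : ℕ) :
    logDerivative (f ^ k) = k • logDerivative f := by
  induction k with
  | zero => simp [logDerivative]
  | succ k ih =>
    rw [pow_succ, logDerivative_mul (by simpa using pow_ne_zero k hf) hf, ih, succ_nsmul]

theorem logDerivative_prod {ι : Type*} (s : Finset ι) (f : ι → K⟦X⟧)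
    (hf : ∀ i ∈ s, constantCoeff (f i) ≠ 0) :
    logDerivative (∏ i ∈ s, f i) = ∑ i ∈ s, logDerivative (f i) := by
  classical
  induction s using Finset.induction_on with
  | empty => simp [logDerivative]
  | insert a s ha ih =>
    rw [Finset.prod_insert ha, Finset.sum_insert ha, logDerivative_mul (hf a (by simp))
      (by simpa [Finset.prod_eq_zero_iff] using fun i hi => hf i (by simp [hi])),
      ih fun i hi => hf i (by simp [hi])]

theorem X_pow_dvd_logDerivative_sub {f g : K⟦X⟧} (hf : constantCoeff f ≠ 0)
    (hg : constantCoeff g ≠ 0) {N : ℕ} (h : X ^ (N + 1) ∣ f - g) :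
    X ^ N ∣ logDerivative f - logDerivative g := by
  obtain ⟨u, hu⟩ := h
  have hfg : f = g + X ^ (N + 1) * u := by rw [← hu]; ring
  have hdf : d⁄dX K f = d⁄dX K g + X ^ N * ((N + 1 : ℕ) • u + X * d⁄dX K u) := by
    rw [hfg, map_add, Derivation.leibniz, Derivation.leibniz_pow, derivative_X]
    simp only [smul_eq_mul, nsmul_eq_mul, Nat.add_sub_cancel]
    ring
  have key : logDerivative f - logDerivative g =
      X ^ N * (((N + 1 : ℕ) • u + X * d⁄dX K u) * g - X * u * d⁄dX K g) * (f⁻¹ * g⁻¹) := by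
    simp only [logDerivative]
    linear_combination -(d⁄dX K f * f⁻¹) * PowerSeries.mul_inv_cancel g hg +
      (d⁄dX K g * g⁻¹) * PowerSeries.mul_inv_cancel f hf + (f⁻¹ * g⁻¹) * g * hdf -
      (f⁻¹ * g⁻¹) * d⁄dX K g * hfg
  exact key ▸ (dvd_mul_right _ _).mul_right _

theorem constantCoeff_one_sub_C_mul_X_pow (c : K) {i : ℕ} (hi : 0 < i) :
    constantCoeff (1 - C c * X ^ i) = 1 := by
  simp [hi.ne']

theorem inv_one_sub_C_mul_X_pow (c : K) {i : ℕ} (hi : 0 < i) :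
    (1 - C c * X ^ i)⁻¹ = mk fun n => if i ∣ n then c ^ (n / i) else 0 := by
  rw [PowerSeries.inv_eq_iff_mul_eq_one (by simp [hi.ne'])]
  ext n
  rw [mul_sub, mul_one, map_sub, mul_left_comm, coeff_C_mul, coeff_mul_X_pow', coeff_one]
  simp only [coeff_mk]
  rcases Nat.eq_zero_or_pos n with rfl | hn
  · simp [hi.ne']
  by_cases hin : i ≤ n
  · obtain ⟨k, rfl⟩ | hdvd := em (i ∣ n)
    · have hk : 0 < k := Nat.pos_of_mul_pos_left hn
      have : i * k - i = i * (k - 1) := by rw [Nat.mul_sub_one]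
      simp [hn.ne', hin, this, Nat.mul_div_cancel_left _ hi, ← pow_succ', Nat.sub_add_cancel hk]
    · have : ¬ i ∣ n - i := by
        rw [Nat.dvd_sub_self_right]
        exact not_or.2 ⟨hdvd, fun h => hdvd (by rw [le_antisymm h hin])⟩
      simp [hn.ne', hin, hdvd, this]
  · have : ¬ i ∣ n := fun h => hin (Nat.le_of_dvd hn h)
    simp [hin, hn.ne', this]

theorem coeff_logDerivative_one_sub_C_mul_X_pow (c : K) {i N : ℕ} (hi : 0 < i) (hN : 0 < N) :
    coeff (N - 1) (logDerivative (1 - C c * X ^ i)) =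
      if i ∣ N then -(i * c ^ (N / i)) else 0 := by
  rw [logDerivative, inv_one_sub_C_mul_X_pow c hi, map_sub, Derivation.map_one_eq_zero,
    zero_sub, Derivation.leibniz, derivative_C, smul_zero, add_zero, Derivation.leibniz_pow,
    derivative_X, smul_eq_mul, nsmul_eq_mul, smul_eq_mul, mul_one, neg_mul, map_neg,
    ← map_natCast (C (R := K)), ← mul_assoc, ← map_mul, mul_assoc, coeff_C_mul, coeff_X_pow_mul']
  obtain ⟨k, rfl⟩ | hdvd := em (i ∣ N)
  · have hk : 0 < k := Nat.pos_of_mul_pos_left hN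
    have : i * k - 1 - (i - 1) = i * (k - 1) := by
      rw [Nat.mul_sub_one]; have := Nat.le_mul_of_pos_right i hk; omega
    simp [this, Nat.mul_div_cancel_left _ hi,
      show i - 1 ≤ i * k - 1 from Nat.sub_le_sub_right (Nat.le_mul_of_pos_right i hk) 1]
    rw [← Nat.sub_add_cancel hk, pow_succ', Nat.add_sub_cancel]
    ring
  · rw [if_neg hdvd]
    split_ifs with hiN
    · have : ¬ i ∣ N - 1 - (i - 1) := by
        rw [show N - 1 - (i - 1) = N - i by omega, Nat.dvd_sub_self_right]
        exact not_or.2 ⟨hdvd, fun h => hdvd (by rw [show N = i by omega])⟩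
      simp [this]
    · simp

end PowerSeries

theorem pow_dvd_one_sub_mul_pow_pow_sub_one {R : Type*} [CommRing R] (x a : R) (i e : ℕ) :
    x ^ i ∣ (1 - a * x ^ i) ^ e - 1 :=
  (Dvd.intro_left (-a) (by ring) : x ^ i ∣ 1 - a * x ^ i - 1).trans
    (by simpa using sub_dvd_pow_sub_pow (1 - a * x ^ i) 1 e)

theorem pow_succ_dvd_prod_Icc_sub_prod_Icc {R : Type*} [CommRing R] (x : R) (F : ℕ → R)
    (hF : ∀ i, x ^ i ∣ F i - 1) {d N : ℕ} (h : d ≤ N) :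
    x ^ (d + 1) ∣ ∏ i ∈ Finset.Icc 1 N, F i - ∏ i ∈ Finset.Icc 1 d, F i := by
  induction N, h using Nat.le_induction with
  | base => simp
  | succ N hdN ih =>
    rw [Finset.prod_Icc_succ_top (by omega),
      show ∀ a b c : R, a * b - c = (a - c) + a * (b - 1) by intros; ring]
    exact dvd_add ih ((pow_dvd_pow x (by omega)).trans (hF (N + 1)) |>.mul_left _)

theorem X_pow_succ_dvd_sub_of_coeff_eq {R : Type*} [CommRing R] {P Q : ℕ → R⟦X⟧}
    (hP : ∀ d N, d ≤ N → X ^ (d + 1) ∣ P N - P d) (hQ : ∀ d N, d ≤ N → X ^ (d + 1) ∣ Q N - Q d)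
    (h : ∀ d, coeff d (P d) = coeff d (Q d)) (N : ℕ) : X ^ (N + 1) ∣ P N - Q N := by
  refine X_pow_dvd_iff.2 fun d hd => ?_
  have hPd := X_pow_dvd_iff.1 (hP d N (by omega)) d d.lt_succ_self
  have hQd := X_pow_dvd_iff.1 (hQ d N (by omega)) d d.lt_succ_self
  rw [map_sub, sub_eq_zero] at hPd hQd ⊢
  rw [hPd, hQd, h]

theorem Finset.sum_neg_one_pow_mul_eq_sub {R : Type*} [CommRing R] (s : Finset ℕ) (f : ℕ → R) :
    ∑ i ∈ s, (-1) ^ i * f i = ∑ i ∈ s.filter Even, f i - ∑ i ∈ s.filter Odd, f i := by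
  rw [← Finset.sum_filter_add_sum_filter_not s Even, sub_eq_add_neg, ← Finset.sum_neg_distrib]
  simp only [Nat.not_even_iff_odd]
  congr 1 <;> refine Finset.sum_congr rfl fun i hi => ?_ <;>
    simp [(Finset.mem_filter.1 hi).2.neg_one_pow]

section SignedProd

variable {K : Type*} [Field K] (m : ℕ → ℕ)

variable (K) in
def signedProd (p : ℕ → Prop) [DecidablePred p] (M : ℕ) : K⟦X⟧ :=
  ∏ i ∈ (Finset.Icc 1 M).filter p, (1 - C ((-1 : K) ^ i) * X ^ i) ^ m i

theorem constantCoeff_signedProd (p : ℕ → Prop) [DecidablePred p] (M : ℕ) :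
    constantCoeff (signedProd K m p M) = 1 := by
  refine (map_prod _ _ _).trans (Finset.prod_eq_one fun i hi => ?_)
  simp only [Finset.mem_filter, Finset.mem_Icc] at hi
  rw [map_pow, constantCoeff_one_sub_C_mul_X_pow _ (by omega : 0 < i), one_pow]

theorem X_pow_succ_dvd_signedProd_sub (p : ℕ → Prop) [DecidablePred p] {d M : ℕ} (h : d ≤ M) :
    X ^ (d + 1) ∣ signedProd K m p M - signedProd K m p d := by
  simp only [signedProd, Finset.prod_filter]
  refine pow_succ_dvd_prod_Icc_sub_prod_Icc X _ (fun i => ?_) h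
  split_ifs
  · exact pow_dvd_one_sub_mul_pow_pow_sub_one X _ i (m i)
  · simp

theorem coeff_logDerivative_signedProd (p : ℕ → Prop) [DecidablePred p] {N M : ℕ} (hN : 0 < N)
    (hNM : N ≤ M) :
    coeff (N - 1) (logDerivative (signedProd K m p M)) =
      -((-1) ^ N * ∑ i ∈ N.divisors.filter p, (i * m i : K)) := by
  have hunit : ∀ i ∈ (Finset.Icc 1 M).filter p, constantCoeff (1 - C ((-1 : K) ^ i) * X ^ i) = 1 :=
    fun i hi => constantCoeff_one_sub_C_mul_X_pow _ (by simp at hi; omega)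
  have hterm : ∀ i ∈ (Finset.Icc 1 M).filter p,
      coeff (N - 1) (logDerivative ((1 - C ((-1 : K) ^ i) * X ^ i) ^ m i)) =
        if i ∣ N then -((-1) ^ N * (i * m i : K)) else 0 := by
    intro i hi
    rw [logDerivative_pow ((hunit i hi).trans_ne one_ne_zero), map_nsmul,
      coeff_logDerivative_one_sub_C_mul_X_pow _ (by simp at hi; omega) hN]
    split_ifs with hiN
    · rw [← pow_mul, Nat.mul_div_cancel' hiN, nsmul_eq_mul]
      ring
    · simp
  have hdiv : ((Finset.Icc 1 M).filter p).filter (· ∣ N) = N.divisors.filter p := by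
    ext i
    simp only [Finset.mem_filter, Finset.mem_Icc, Nat.mem_divisors]
    constructor
    · rintro ⟨⟨-, hp⟩, hiN⟩
      exact ⟨⟨hiN, hN.ne'⟩, hp⟩
    · rintro ⟨⟨hiN, -⟩, hp⟩
      exact ⟨⟨⟨Nat.pos_of_dvd_of_pos hiN hN, (Nat.le_of_dvd hN hiN).trans hNM⟩, hp⟩, hiN⟩
  rw [signedProd, logDerivative_prod _ _ fun i hi => by
      rw [map_pow, hunit i hi, one_pow]; exact one_ne_zero, map_sum,
    Finset.sum_congr rfl hterm, ← Finset.sum_filter, hdiv, Finset.mul_sum, Finset.sum_neg_distrib]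

theorem sum_divisors_neg_one_pow_mul_eq {α β : K} {q : ℕ} (hq : 0 < q)
    (H : ∀ d, coeff d ((1 - C α * X ^ q) * (1 - C β * X ^ q) *
        ∏ i ∈ (Finset.Icc 1 d).filter Odd, (1 + X ^ i) ^ m i) =
      coeff d (∏ i ∈ (Finset.Icc 1 d).filter Even, (1 - X ^ i) ^ m i))
    {N : ℕ} (hN : 0 < N) :
    ∑ i ∈ N.divisors, (-1 : K) ^ (N + i) * (i * m i) =
      if q ∣ N then q * (α ^ (N / q) + β ^ (N / q)) else 0 := by
  have hodd : ∀ d, ∏ i ∈ (Finset.Icc 1 d).filter Odd, (1 + X ^ i) ^ m i = signedProd K m Odd d :=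
    fun d => Finset.prod_congr rfl fun i hi => by simp [(Finset.mem_filter.1 hi).2.neg_one_pow]
  have heven : ∀ d, ∏ i ∈ (Finset.Icc 1 d).filter Even, (1 - X ^ i) ^ m i =
      signedProd K m Even d :=
    fun d => Finset.prod_congr rfl fun i hi => by simp [(Finset.mem_filter.1 hi).2.neg_one_pow]
  simp only [hodd, heven] at H
  have hα := constantCoeff_one_sub_C_mul_X_pow α hq
  have hβ := constantCoeff_one_sub_C_mul_X_pow β hq
  have hG : constantCoeff ((1 - C α * X ^ q) * (1 - C β * X ^ q)) = 1 := by
    rw [map_mul, hα, hβ, one_mul]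
  have hdvd : X ^ (N + 1) ∣ (1 - C α * X ^ q) * (1 - C β * X ^ q) * signedProd K m Odd N -
      signedProd K m Even N :=
    X_pow_succ_dvd_sub_of_coeff_eq
      (fun d M h => by rw [← mul_sub]; exact (X_pow_succ_dvd_signedProd_sub m Odd h).mul_left _)
      (fun d M h => X_pow_succ_dvd_signedProd_sub m Even h) H N
  have hcoeff := X_pow_dvd_iff.1 (X_pow_dvd_logDerivative_sub
    (by rw [map_mul, hG, constantCoeff_signedProd, one_mul]; exact one_ne_zero)
    ((constantCoeff_signedProd m _ _).trans_ne one_ne_zero) hdvd) (N - 1) (by omega)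
  rw [map_sub, sub_eq_zero, logDerivative_mul (hG.trans_ne one_ne_zero)
      ((constantCoeff_signedProd m _ _).trans_ne one_ne_zero),
    logDerivative_mul (hα.trans_ne one_ne_zero) (hβ.trans_ne one_ne_zero), map_add, map_add,
    coeff_logDerivative_one_sub_C_mul_X_pow _ hq hN,
    coeff_logDerivative_one_sub_C_mul_X_pow _ hq hN,
    coeff_logDerivative_signedProd m _ hN le_rfl, coeff_logDerivative_signedProd m _ hN le_rfl]
    at hcoeff
  simp only [pow_add, mul_assoc, ← Finset.mul_sum, Finset.sum_neg_one_pow_mul_eq_sub]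
  split_ifs at hcoeff ⊢ <;> linear_combination hcoeff

end SignedProd

def lucasRoot (r : ℝ) : ℝ := (r + √(r ^ 2 - 4)) / 2

theorem lucasRoot_add_inv {r : ℝ} (hr : 2 ≤ r) : lucasRoot r + (lucasRoot r)⁻¹ = r := by
  have hs := Real.sq_sqrt (by nlinarith : (0 : ℝ) ≤ r ^ 2 - 4)
  have hpos : 0 < lucasRoot r := by unfold lucasRoot; positivity
  field_simp
  unfold lucasRoot
  nlinarith

theorem one_le_lucasRoot {r : ℝ} (hr : 2 ≤ r) : 1 ≤ lucasRoot r := by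
  have := Real.sqrt_nonneg (r ^ 2 - 4)
  unfold lucasRoot
  linarith

theorem two_le_lucasRoot {r : ℝ} (hr : 3 ≤ r) : 2 ≤ lucasRoot r := by
  have : 1 ≤ √(r ^ 2 - 4) := Real.one_le_sqrt.2 (by nlinarith)
  unfold lucasRoot
  linarith

theorem lucasRoot_pow_add_inv_pow {r : ℕ} (hr : 2 ≤ r) (j : ℕ) :
    lucasRoot r ^ j + (lucasRoot r)⁻¹ ^ j =
      (((Polynomial.dickson 1 (1 : ℤ) j).eval (r : ℤ) : ℤ) : ℝ) := by
  have hr' : (2 : ℝ) ≤ r := by exact_mod_cast hr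
  rw [← Polynomial.dickson_one_one_eval_add_inv _ _
      (mul_inv_cancel₀ (by linarith [one_le_lucasRoot hr'])), lucasRoot_add_inv hr',
    ← Polynomial.eval_intCast_dickson]
  simp

theorem lucasRoot_pow_le_eval_dickson {r : ℕ} (hr : 2 ≤ r) (j : ℕ) :
    lucasRoot r ^ j ≤ (((Polynomial.dickson 1 (1 : ℤ) j).eval (r : ℤ) : ℤ) : ℝ) ∧
      (((Polynomial.dickson 1 (1 : ℤ) j).eval (r : ℤ) : ℤ) : ℝ) ≤ 2 * lucasRoot r ^ j := by
  have hα := one_le_lucasRoot (r := r) (by exact_mod_cast hr)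
  have hinv : (lucasRoot r)⁻¹ ^ j ≤ lucasRoot r ^ j :=
    pow_le_pow_left₀ (by positivity) ((inv_le_one_of_one_le₀ hα).trans hα) j
  rw [← lucasRoot_pow_add_inv_pow hr]
  constructor <;> nlinarith [pow_pos (inv_pos.2 (zero_lt_one.trans_le hα)) j]

theorem divisorIdentity_dickson {r q : ℕ} (hr : 2 ≤ r) (hq : 0 < q) (m : ℕ → ℕ)
    (H : ∀ d, coeff (R := ℚ) d ((1 - C (r : ℚ) * X ^ q + X ^ (2 * q)) *
        ∏ i ∈ (Finset.Icc 1 d).filter Odd, (1 + X ^ i) ^ m i) =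
      coeff d (∏ i ∈ (Finset.Icc 1 d).filter Even, (1 - X ^ i) ^ m i)) :
    DivisorIdentity q (fun k => (Polynomial.dickson 1 (1 : ℤ) k).eval (r : ℤ)) m := by
  intro N hN
  have hr' : (2 : ℝ) ≤ r := by exact_mod_cast hr
  set α := lucasRoot r
  have hα : α * α⁻¹ = 1 := mul_inv_cancel₀ (by linarith [one_le_lucasRoot hr'])
  have hG : (1 - C α * X ^ q) * (1 - C α⁻¹ * X ^ q) =
      PowerSeries.map (Rat.castHom ℝ) (1 - C (r : ℚ) * X ^ q + X ^ (2 * q)) := by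
    have : (1 - C α * X ^ q) * (1 - C α⁻¹ * X ^ q) =
        1 - C (α + α⁻¹) * X ^ q + C (α * α⁻¹) * X ^ (2 * q) := by
      simp only [map_add, map_mul]; ring
    simp [this, lucasRoot_add_inv hr', hα, α]
  have HR : ∀ d, coeff d ((1 - C α * X ^ q) * (1 - C α⁻¹ * X ^ q) *
      ∏ i ∈ (Finset.Icc 1 d).filter Odd, (1 + X ^ i) ^ m i) =
      coeff d (∏ i ∈ (Finset.Icc 1 d).filter Even, (1 - X ^ i) ^ m i) := by
    intro d
    have hodd : ∏ i ∈ (Finset.Icc 1 d).filter Odd, (1 + X ^ i : ℝ⟦X⟧) ^ m i =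
        PowerSeries.map (Rat.castHom ℝ)
          (∏ i ∈ (Finset.Icc 1 d).filter Odd, (1 + X ^ i) ^ m i) := by
      simp [map_prod]
    have heven : ∏ i ∈ (Finset.Icc 1 d).filter Even, (1 - X ^ i : ℝ⟦X⟧) ^ m i =
        PowerSeries.map (Rat.castHom ℝ)
          (∏ i ∈ (Finset.Icc 1 d).filter Even, (1 - X ^ i) ^ m i) := by
      simp [map_prod]
    rw [hG, hodd, heven, ← map_mul, coeff_map, coeff_map, H d]
  have := sum_divisors_neg_one_pow_mul_eq m hq HR hN
  simp only [α, lucasRoot_pow_add_inv_pow hr] at this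
  exact_mod_cast this

section RankPoly

open Polynomial

def rankPoly (q j : ℕ) : ℚ[X] :=
  Polynomial.C (1 / j : ℚ) * (dickson 1 1 j -
    ∑ a ∈ j.properDivisors.attach, Polynomial.C ((-1) ^ (j * q + a * q) * a : ℚ) * rankPoly q a)
decreasing_by exact (Nat.mem_properDivisors.1 a.2).2

theorem rankPoly_eq (q j : ℕ) : rankPoly q j = Polynomial.C (1 / j : ℚ) * (dickson 1 1 j -
    ∑ a ∈ j.properDivisors, Polynomial.C ((-1) ^ (j * q + a * q) * a : ℚ) * rankPoly q a) := by
  rw [rankPoly, Finset.sum_attach j.properDivisors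
    (fun a => Polynomial.C ((-1) ^ (j * q + a * q) * a : ℚ) * rankPoly q a)]

theorem natDegree_rankPoly_and_leadingCoeff (q : ℕ) {j : ℕ} (hj : 0 < j) :
    (rankPoly q j).natDegree = j ∧ (rankPoly q j).leadingCoeff = 1 / j := by
  induction j using Nat.strong_induction_on with
  | _ j ih =>
    obtain ⟨hmon, hdeg⟩ := dickson_one_one_monic_and_natDegree_eq (R := ℚ) hj
    have hsum : (∑ a ∈ j.properDivisors, Polynomial.C ((-1) ^ (j * q + a * q) * a : ℚ) *
        rankPoly q a).natDegree < (dickson 1 (1 : ℚ) j).natDegree := by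
      refine lt_of_le_of_lt (natDegree_sum_le_of_forall_le _ _ (n := j - 1) fun a ha => ?_)
        (by omega)
      obtain ⟨haj, hlt⟩ := Nat.mem_properDivisors.1 ha
      refine natDegree_C_mul_le _ _ |>.trans ?_
      rw [(ih a hlt (Nat.pos_of_dvd_of_pos haj hj)).1]
      omega
    have hj' : (1 / j : ℚ) ≠ 0 := by positivity
    rw [rankPoly_eq, natDegree_C_mul hj', natDegree_sub_eq_left_of_natDegree_lt hsum, hdeg,
      leadingCoeff_mul, leadingCoeff_C, (hmon.sub_of_left (degree_lt_degree hsum)).leadingCoeff,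
      mul_one]
    exact ⟨rfl, rfl⟩

theorem DivisorIdentity.eval_rankPoly {r q : ℕ} {m : ℕ → ℕ}
    (hm : DivisorIdentity q (fun k => (dickson 1 (1 : ℤ) k).eval (r : ℤ)) m) (hq : 0 < q) {j : ℕ}
    (hj : 0 < j) :
    (rankPoly q j).eval (r : ℚ) = m (j * q) := by
  induction j using Nat.strong_induction_on with
  | _ j ih =>
    have hrec := congrArg (Int.cast : ℤ → ℚ) (hm.mul_eq_sub_sum_properDivisors hq hj)
    push_cast at hrec
    rw [← eval_intCast_dickson, Int.cast_one, Int.cast_natCast] at hrec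
    have hsum : ∀ a ∈ j.properDivisors,
        (Polynomial.C ((-1) ^ (j * q + a * q) * a : ℚ) * rankPoly q a).eval (r : ℚ) =
          (-1) ^ (j * q + a * q) * (a * m (a * q)) := fun a ha => by
      obtain ⟨haj, hlt⟩ := Nat.mem_properDivisors.1 ha
      rw [eval_mul, eval_C, ih a hlt (Nat.pos_of_dvd_of_pos haj hj), mul_assoc]
    rw [rankPoly_eq, eval_mul, eval_C, eval_sub, eval_finsetSum, Finset.sum_congr rfl hsum,
      ← hrec]
    field_simp

end RankPoly

section Growth

variable {α : ℝ}

theorem sum_Icc_pow_le (hα : 2 ≤ α) (k : ℕ) : ∑ a ∈ Finset.Icc 1 k, α ^ a ≤ 2 * (α ^ k - 1) := by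
  induction k with
  | zero => simp
  | succ k ih =>
    rw [Finset.sum_Icc_succ_top (by omega), pow_succ]
    nlinarith [pow_pos (by linarith : 0 < α) k]

theorem sum_properDivisors_le_of_le_four_mul_pow (hα : 2 ≤ α) {T : ℕ → ℝ} {j : ℕ}
    (hT : ∀ a ∈ j.properDivisors, T a ≤ 4 * α ^ a) :
    ∑ a ∈ j.properDivisors, T a ≤ 8 * (α ^ (j / 2) - 1) :=
  calc ∑ a ∈ j.properDivisors, T a
      ≤ ∑ a ∈ j.properDivisors, 4 * α ^ a := Finset.sum_le_sum hT
    _ ≤ ∑ a ∈ Finset.Icc 1 (j / 2), 4 * α ^ a :=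
      Finset.sum_le_sum_of_subset_of_nonneg (fun a ha => Finset.mem_Icc.2
        ⟨Nat.pos_of_mem_properDivisors ha, Nat.le_div_two_of_mem_properDivisors ha⟩)
        fun _ _ _ => mul_nonneg (by norm_num) (pow_nonneg (by linarith) _)
    _ ≤ 8 * (α ^ (j / 2) - 1) := by
      rw [← Finset.mul_sum]; linarith [sum_Icc_pow_le hα (j / 2)]

theorem eight_mul_pow_half_sub_one_le (hα : 2 ≤ α) (j : ℕ) :
    8 * (α ^ (j / 2) - 1) ≤ 2 * α ^ j := by
  have : (α ^ (j / 2)) ^ 2 ≤ α ^ j := by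
    rw [← pow_mul]; exact pow_le_pow_right₀ (by linarith) (by omega)
  nlinarith [sq_nonneg (α ^ (j / 2) - 2)]

theorem le_four_mul_pow_of_abs_sub_le (hα : 2 ≤ α) {T L : ℕ → ℝ} (hL : ∀ j, L j ≤ 2 * α ^ j)
    (hT : ∀ j, 0 < j → |T j - L j| ≤ ∑ a ∈ j.properDivisors, T a) {j : ℕ} (hj : 0 < j) :
    T j ≤ 4 * α ^ j := by
  induction j using Nat.strong_induction_on with
  | _ j ih =>
    have hsum := sum_properDivisors_le_of_le_four_mul_pow hα fun a ha =>
      ih a (Nat.mem_properDivisors.1 ha).2 (Nat.pos_of_mem_properDivisors ha)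
    linarith [(abs_le.1 (hT j hj)).2, hL j, eight_mul_pow_half_sub_one_le hα j]

theorem pow_div_two_le_of_abs_sub_le (hα : 2 ≤ α) {T L : ℕ → ℝ}
    (hL : ∀ j, α ^ j ≤ L j ∧ L j ≤ 2 * α ^ j)
    (hT : ∀ j, 0 < j → |T j - L j| ≤ ∑ a ∈ j.properDivisors, T a) {j : ℕ} (hj : 8 ≤ j) :
    α ^ j / 2 ≤ T j := by
  have hsum := sum_properDivisors_le_of_le_four_mul_pow (j := j) hα fun a ha =>
    le_four_mul_pow_of_abs_sub_le hα (fun j => (hL j).2) hT (Nat.pos_of_mem_properDivisors ha)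
  have h16 : 16 * α ^ (j / 2) ≤ α ^ j :=
    calc 16 * α ^ (j / 2) = 2 ^ 4 * α ^ (j / 2) := by norm_num
      _ ≤ α ^ (j - j / 2) * α ^ (j / 2) := by
          gcongr
          exact (pow_le_pow_left₀ (by norm_num) hα 4).trans
            (pow_le_pow_right₀ (by linarith) (by omega))
      _ = α ^ j := by rw [← pow_add]; congr 1; omega
  linarith [(abs_le.1 (hT j (by omega))).1, (hL j).1]

end Growth

theorem tendsto_mul_pow_div_rpow_inv {α a : ℝ} (hα : 0 ≤ α) (ha : 0 < a) :
    Tendsto (fun j : ℕ => (a * α ^ j / j) ^ (j : ℝ)⁻¹) atTop (𝓝 α) := by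
  have hconst : Tendsto (fun j : ℕ => a ^ (j : ℝ)⁻¹) atTop (𝓝 1) := by
    simpa [Function.comp_def] using (Real.continuousAt_const_rpow ha.ne').tendsto.comp
      (tendsto_inv_atTop_zero.comp tendsto_natCast_atTop_atTop)
  have hroot : Tendsto (fun j : ℕ => (j : ℝ) ^ (j : ℝ)⁻¹) atTop (𝓝 1) := by
    simpa [Function.comp_def, one_div] using tendsto_rpow_div.comp tendsto_natCast_atTop_atTop
  have hlim := (hconst.div hroot one_ne_zero).mul_const α
  rw [div_one, one_mul] at hlim
  refine hlim.congr' ?_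
  filter_upwards [eventually_ge_atTop 1] with j hj
  rw [Real.div_rpow (by positivity) (by positivity), Real.mul_rpow ha.le (by positivity),
    Real.pow_rpow_inv_natCast hα (by positivity), Pi.div_apply]
  ring

theorem tendsto_rpow_inv_of_le_of_le {x : ℕ → ℝ} {α c C : ℝ} (hα : 0 ≤ α) (hc : 0 < c)
    (hC : 0 < C) (h : ∀ᶠ j : ℕ in atTop, c * α ^ j ≤ j * x j ∧ j * x j ≤ C * α ^ j) :
    Tendsto (fun j : ℕ => x j ^ (j : ℝ)⁻¹) atTop (𝓝 α) := by
  refine tendsto_of_tendsto_of_tendsto_of_le_of_le' (tendsto_mul_pow_div_rpow_inv hα hc)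
    (tendsto_mul_pow_div_rpow_inv hα hC) ?_ ?_
  · filter_upwards [h, eventually_ge_atTop 1] with j hj hj1
    have hj0 : (0 : ℝ) < j := by positivity
    exact Real.rpow_le_rpow (by positivity) ((div_le_iff₀' hj0).2 hj.1) (by positivity)
  · filter_upwards [h, eventually_ge_atTop 1] with j hj hj1
    have hj0 : (0 : ℝ) < j := by positivity
    have hx : c * α ^ j / j ≤ x j := (div_le_iff₀' hj0).2 hj.1
    exact Real.rpow_le_rpow (hx.trans' (by positivity)) ((le_div_iff₀' hj0).2 hj.2) (by positivity)

/-- Let `r ≥ 3`, `n ≥ 2`, and define `m_d` (`d ≥ 1`) by the formal power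
series identity `∏_{i odd} (1+t^i)^{m_i} / ∏_{i even} (1−t^i)^{m_i} = 1/(1 − r t^{n−1} + t^{2n−2})`
(encoded coefficientwise: for every degree `d`, only the finitely many factors with index
`≤ d` matter).  Then `m_d = 0` unless `(n−1) ∣ d`; there are polynomials `p_j` with
`p_j(r) = m_{j(n−1)}`, degree `j` and leading coefficient `1/j`; and
`m_{j(n−1)}^{1/j} → (r + √(r²−4))/2 > 1`.  In particular the `m_d` are not eventually
zero. -/
theorem rational_homotopy_ranks_hyperbolic (r n : ℕ) (hr : 3 ≤ r) (hn : 2 ≤ n)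
    (m : ℕ → ℕ)
    (H : ∀ d : ℕ,
      PowerSeries.coeff (R := ℚ) d
        ((1 - PowerSeries.C (R := ℚ) (r : ℚ) * PowerSeries.X ^ (n - 1) +
            PowerSeries.X ^ (2 * n - 2)) *
          ∏ i ∈ (Finset.Icc 1 d).filter (fun i => Odd i),
            (1 + PowerSeries.X ^ i) ^ (m i)) =
      PowerSeries.coeff (R := ℚ) d
        (∏ i ∈ (Finset.Icc 1 d).filter (fun i => Even i),
            (1 - PowerSeries.X ^ i) ^ (m i))) :
    (∀ d : ℕ, 1 ≤ d → ¬ (n - 1) ∣ d → m d = 0) ∧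
    (∃ p : ℕ → Polynomial ℚ, ∀ j : ℕ, 1 ≤ j →
      (p j).eval (r : ℚ) = (m (j * (n - 1)) : ℚ) ∧
      (p j).natDegree = j ∧ (p j).leadingCoeff = 1 / (j : ℚ)) ∧
    Tendsto (fun j : ℕ => ((m (j * (n - 1)) : ℝ)) ^ ((j : ℝ)⁻¹)) atTop
      (nhds (((r : ℝ) + Real.sqrt ((r : ℝ) ^ 2 - 4)) / 2)) ∧
    1 < ((r : ℝ) + Real.sqrt ((r : ℝ) ^ 2 - 4)) / 2 ∧
    (∀ N : ℕ, ∃ d : ℕ, N ≤ d ∧ m d ≠ 0) := by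
  have hq : 0 < n - 1 := by omega
  have hα : 2 ≤ lucasRoot r := two_le_lucasRoot (by exact_mod_cast hr)
  have hm := divisorIdentity_dickson (r := r) (by omega) hq m
    (by rwa [show 2 * n - 2 = 2 * (n - 1) by omega] at H)
  have hL := lucasRoot_pow_le_eval_dickson (r := r) (by omega)
  have hT (j : ℕ) (hj : 0 < j) := hm.abs_mul_sub_le_sum_properDivisors hq hj
  have hgrowth (j : ℕ) (hj : 8 ≤ j) : lucasRoot r ^ j / 2 ≤ j * m (j * (n - 1)) ∧
      (j * m (j * (n - 1)) : ℝ) ≤ 4 * lucasRoot r ^ j :=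
    ⟨pow_div_two_le_of_abs_sub_le hα hL hT hj,
      le_four_mul_pow_of_abs_sub_le (j := j) hα (fun j => (hL j).2) hT (by omega)⟩
  refine ⟨fun d hd => hm.eq_zero_of_not_dvd hd, ⟨rankPoly (n - 1), fun j hj =>
    ⟨hm.eval_rankPoly hq hj, natDegree_rankPoly_and_leadingCoeff _ hj⟩⟩, ?_,
    show 1 < lucasRoot r by linarith, fun N => ⟨(N + 8) * (n - 1), by nlinarith, fun h0 => ?_⟩⟩
  · refine tendsto_rpow_inv_of_le_of_le (α := lucasRoot r) (c := 1 / 2) (C := 4) (by linarith)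
      (by norm_num) (by norm_num) (eventually_atTop.2 ⟨8, fun j hj => ?_⟩)
    exact ⟨by linarith [(hgrowth j hj).1], (hgrowth j hj).2⟩
  · have := (hgrowth (N + 8) (by omega)).1
    rw [h0, Nat.cast_zero, mul_zero] at this
    linarith [pow_pos (by linarith : (0 : ℝ) < lucasRoot r) (N + 8)]
end
end
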